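/- arXiv:0712.1865 — 4 statements merged into one kernel-verified Lean document; each statement's English description precedes it below -/
import Mathlib

section
/- Suppose differentiable maps f, f̃ : U → ℍ satisfy the conjugate cousin equation and f̃(z) ≠ 0 for every z ∈ U. Let W : U → ℍ be differentiable and define the transplant W̄(z) := f̃(z)⁻¹·W(z). Then for every z ∈ U and every w ∈ ℂ, f̃(z)⁻¹·(DW(z)(w)) = DW̄(z)(w) + (Df(z)(i·w))·W̄(z). -/
open scoped Quaternion

/-- If `f, f̃ : U → ℍ` satisfy the conjugate cousin equation `Df̃(z)(w) = f̃(z)·Df(z)(i·w)`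
and `f̃` is nonvanishing on `U`, then for any differentiable field `W : U → ℍ` the
transplant `W̄(z) = f̃(z)⁻¹·W(z)` satisfies
`f̃(z)⁻¹·DW(z)(w) = DW̄(z)(w) + Df(z)(i·w)·W̄(z)`. -/
theorem transplant_derivative_formula
    (U : Set ℂ) (hU : IsOpen U) (f ftil : ℂ → ℍ[ℝ])
    (hf : ∀ z ∈ U, DifferentiableAt ℝ f z)
    (hftil : ∀ z ∈ U, DifferentiableAt ℝ ftil z)
    (hne : ∀ z ∈ U, ftil z ≠ 0)
    (hcousin : ∀ z ∈ U, ∀ w : ℂ,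
      fderiv ℝ ftil z w = ftil z * fderiv ℝ f z (Complex.I * w))
    (W : ℂ → ℍ[ℝ]) (hW : ∀ z ∈ U, DifferentiableAt ℝ W z)
    (Wbar : ℂ → ℍ[ℝ]) (hWbar : Wbar = fun z => (ftil z)⁻¹ * W z) :
    ∀ z ∈ U, ∀ w : ℂ,
      (ftil z)⁻¹ * fderiv ℝ W z w =
        fderiv ℝ Wbar z w + fderiv ℝ f z (Complex.I * w) * Wbar z := by
  intro z hz w
  have hWb : DifferentiableAt ℝ Wbar z := by
    rw [hWbar]
    exact ((hftil z hz).inv (hne z hz)).mul (hW z hz)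
  have heq : W =ᶠ[nhds z] fun z' => ftil z' * Wbar z' := by
    have hcont : ∀ᶠ z' in nhds z, ftil z' ≠ 0 :=
      (hftil z hz).continuousAt.eventually_ne (hne z hz)
    filter_upwards [hcont] with x hx
    simp [hWbar, ← mul_assoc, mul_inv_cancel₀ hx]
  have hfd : fderiv ℝ W z = fderiv ℝ (fun z' => ftil z' * Wbar z') z :=
    heq.fderiv_eq
  rw [hfd, fderiv_fun_mul' (hftil z hz) hWb]
  simp only [ContinuousLinearMap.add_apply, ContinuousLinearMap.smul_apply,
    ContinuousLinearMap.smulRight_apply, smul_eq_mul, op_smul_eq_mul, hcousin z hz w]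
  rw [mul_add, ← mul_assoc, ← mul_assoc, ← mul_assoc, inv_mul_cancel₀ (hne z hz),
    one_mul, one_mul]
end

section
/- Let U ⊆ ℂ be open and connected, let f̃ : U → ℍ be differentiable with f̃(z) ≠ 0 for all z ∈ U, and let Ṽ : U → ℍ be differentiable and satisfy DṼ(z)(w) = Ṽ(z)·f̃(z)⁻¹·(Df̃(z)(w)) for all z ∈ U and w ∈ ℂ. Then there exists a quaternion u such that Ṽ(z) = u·f̃(z) for all z ∈ U. (A cousin of the zero Jacobi field is an infinitesimal left-translation; hence cousins are unique up to left-translation.) -/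
open scoped Quaternion

open Metric Set in
private lemma aux_const_on_connected {g : ℂ → ℍ[ℝ]} {U : Set ℂ} (hU : IsOpen U)
    (hconn : IsConnected U)
    (hg0 : ∀ z ∈ U, HasFDerivAt g (0 : ℂ →L[ℝ] ℍ[ℝ]) z)
    {z₀ : ℂ} (hz₀ : z₀ ∈ U) : ∀ z ∈ U, g z = g z₀ := by
  classical
  -- local constancy
  have hloc : ∀ z ∈ U, ∃ ε > 0, ball z ε ⊆ U ∧ ∀ y ∈ ball z ε, g y = g z := by
    intro z hz
    obtain ⟨ε, hε, hball⟩ := Metric.isOpen_iff.1 hU z hz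
    refine ⟨ε, hε, hball, fun y hy => ?_⟩
    refine (convex_ball z ε).is_const_of_fderivWithin_eq_zero
      (fun x hx => ((hg0 x (hball hx)).differentiableAt).differentiableWithinAt)
      (fun x hx => ?_) hy (mem_ball_self hε)
    rw [fderivWithin_of_isOpen isOpen_ball hx]
    exact (hg0 x (hball hx)).fderiv
  choose! ε hε hball hconst using hloc
  set A : Set ℂ := ⋃ (z : ℂ) (_ : z ∈ U ∧ g z = g z₀), ball z (ε z) with hA
  set B : Set ℂ := ⋃ (z : ℂ) (_ : z ∈ U ∧ g z ≠ g z₀), ball z (ε z) with hB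
  have hAopen : IsOpen A := isOpen_iUnion fun z => isOpen_iUnion fun _ => isOpen_ball
  have hBopen : IsOpen B := isOpen_iUnion fun z => isOpen_iUnion fun _ => isOpen_ball
  have hdisj : Disjoint A B := by
    rw [Set.disjoint_left]
    rintro y hyA hyB
    simp only [hA, hB, mem_iUnion] at hyA hyB
    obtain ⟨a, ⟨haU, hag⟩, hya⟩ := hyA
    obtain ⟨b, ⟨hbU, hbg⟩, hyb⟩ := hyB
    have h1 : g y = g a := hconst a haU y hya
    have h2 : g y = g b := hconst b hbU y hyb
    exact hbg (h2 ▸ h1 ▸ hag ▸ rfl : g b = g z₀)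
  have hsub : U ⊆ A ∪ B := by
    intro z hz
    by_cases h : g z = g z₀
    · exact Or.inl (Set.mem_iUnion₂.2 ⟨z, ⟨hz, h⟩, mem_ball_self (hε z hz)⟩)
    · exact Or.inr (Set.mem_iUnion₂.2 ⟨z, ⟨hz, h⟩, mem_ball_self (hε z hz)⟩)
  have hUA : U ⊆ A := by
    refine hconn.isPreconnected.subset_left_of_subset_union hAopen hBopen hdisj hsub
      ⟨z₀, hz₀, Set.mem_iUnion₂.2 ⟨z₀, ⟨hz₀, rfl⟩, mem_ball_self (hε z₀ hz₀)⟩⟩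
  intro z hz
  obtain ⟨a, ⟨haU, hag⟩, hya⟩ := Set.mem_iUnion₂.1 (hUA hz)
  rw [hconst a haU z hya, hag]

/-- On an open connected set `U ⊆ ℂ`, if `f̃ : U → ℍ` is differentiable and nonvanishing and
`Ṽ : U → ℍ` is differentiable with `DṼ(z)(w) = Ṽ(z)·f̃(z)⁻¹·Df̃(z)(w)`, then `Ṽ = u·f̃` for
some fixed quaternion `u`: a cousin of the zero Jacobi field is an infinitesimal
left-translation. -/
theorem cousin_of_zero_is_left_translation
    (U : Set ℂ) (hU : IsOpen U) (hconn : IsConnected U)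
    (ftil : ℂ → ℍ[ℝ]) (hftil : ∀ z ∈ U, DifferentiableAt ℝ ftil z)
    (hne : ∀ z ∈ U, ftil z ≠ 0)
    (Vtil : ℂ → ℍ[ℝ]) (hVtil : ∀ z ∈ U, DifferentiableAt ℝ Vtil z)
    (heq : ∀ z ∈ U, ∀ w : ℂ,
      fderiv ℝ Vtil z w = Vtil z * (ftil z)⁻¹ * fderiv ℝ ftil z w) :
    ∃ u : ℍ[ℝ], ∀ z ∈ U, Vtil z = u * ftil z := by
  classical
  set g : ℂ → ℍ[ℝ] := fun z => Vtil z * (ftil z)⁻¹ with hgdef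
  have hg0 : ∀ z ∈ U, HasFDerivAt g (0 : ℂ →L[ℝ] ℍ[ℝ]) z := by
    intro z hz
    have hf := (hftil z hz).hasFDerivAt
    have hV := (hVtil z hz).hasFDerivAt
    have hinv : HasFDerivAt (fun y => (ftil y)⁻¹)
        ((-ContinuousLinearMap.mulLeftRight ℝ ℍ[ℝ] (ftil z)⁻¹ (ftil z)⁻¹).comp
          (fderiv ℝ ftil z)) z :=
      (hasFDerivAt_inv' (hne z hz)).comp z hf
    have h := hV.mul' hinv
    have hD : (Vtil z • ((-ContinuousLinearMap.mulLeftRight ℝ ℍ[ℝ] (ftil z)⁻¹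
        (ftil z)⁻¹).comp (fderiv ℝ ftil z)) + (fderiv ℝ Vtil z).smulRight (ftil z)⁻¹)
        = (0 : ℂ →L[ℝ] ℍ[ℝ]) := by
      refine ContinuousLinearMap.ext fun w => ?_
      simp only [ContinuousLinearMap.zero_apply, ContinuousLinearMap.add_apply,
        ContinuousLinearMap.smul_apply, ContinuousLinearMap.smulRight_apply,
        ContinuousLinearMap.comp_apply, ContinuousLinearMap.neg_apply,
        ContinuousLinearMap.mulLeftRight_apply, smul_eq_mul, heq z hz w]
      noncomm_ring
    rw [show MulOpposite.op (ftil z)⁻¹ • fderiv ℝ Vtil z = (fderiv ℝ Vtil z).smulRight (ftil z)⁻¹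
      from ContinuousLinearMap.ext fun w => rfl, hD] at h
    exact h
  obtain ⟨z₀, hz₀⟩ := hconn.nonempty
  refine ⟨g z₀, fun z hz => ?_⟩
  have hc := aux_const_on_connected hU hconn hg0 hz₀ z hz
  have : g z * ftil z = Vtil z := by
    simp only [hgdef]
    exact inv_mul_cancel_right₀ (hne z hz) (Vtil z)
  rw [← this, hc]
end

section
/- Let u be a purely imaginary unit quaternion and let p, q be unit quaternions. Then Π_u(q) = Π_u(p) if and only if there exists t ∈ ℝ with q = p·exp(t·u). (The fibers of the u-Hopf projection are exactly the u-Hopf circles t ↦ p·exp(t·u).) -/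
open scoped Quaternion

lemma exp_smul_unit_im (u : ℍ[ℝ]) (hu_im : u.re = 0) (hu_norm : ‖u‖ = 1) (t : ℝ) :
    NormedSpace.exp (t • u) = ↑(Real.cos t) + (Real.sin t) • u := by
  have hre : (t • u).re = 0 := by simp [hu_im]
  rw [Quaternion.exp_of_re_eq_zero _ hre]
  have hnorm : ‖t • u‖ = |t| := by
    rw [norm_smul, hu_norm, mul_one, Real.norm_eq_abs]
  rw [hnorm, smul_smul]
  rcases lt_trichotomy t 0 with h | h | h
  · rw [abs_of_neg h, Real.cos_neg, Real.sin_neg]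
    congr 1
    rw [neg_div_neg_eq, div_mul_cancel₀ _ h.ne]
  · simp [h]
  · rw [abs_of_pos h]
    congr 1
    rw [div_mul_cancel₀ _ h.ne']

/-- The fibers of the `u`-Hopf projection `Π_u(p) = p·u·p⁻¹` are exactly the `u`-Hopf
circles `t ↦ p·exp(t·u)`: for unit quaternions `p, q`, `Π_u(q) = Π_u(p)` iff
`q = p·exp(t·u)` for some real `t`. -/
theorem hopf_fiber_eq_hopf_circle
    (u p q : ℍ[ℝ]) (hu_im : u.re = 0) (hu_norm : ‖u‖ = 1)
    (hp : ‖p‖ = 1) (hq : ‖q‖ = 1) :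
    q * u * q⁻¹ = p * u * p⁻¹ ↔ ∃ t : ℝ, q = p * NormedSpace.exp (t • u) := by
  have hp0 : p ≠ 0 := by intro h; rw [h, norm_zero] at hp; norm_num at hp
  have hq0 : q ≠ 0 := by intro h; rw [h, norm_zero] at hq; norm_num at hq
  have hu0 : u ≠ 0 := by intro h; rw [h, norm_zero] at hu_norm; norm_num at hu_norm
  have hu2 : u * u = -1 := by
    have h1 := Quaternion.sq_eq_neg_normSq.mpr hu_im
    rw [sq] at h1
    rw [h1]
    have h2 : Quaternion.normSq u = 1 := by
      rw [Quaternion.normSq_eq_norm_mul_self, hu_norm]; norm_num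
    rw [h2]; norm_num
  constructor
  · intro h
    obtain ⟨r, hr⟩ : ∃ r : ℍ[ℝ], r = p⁻¹ * q := ⟨_, rfl⟩
    have hrnorm : ‖r‖ = 1 := by
      rw [hr, norm_mul, norm_inv, hp, hq]; norm_num
    have h1 : q * u = p * u * (p⁻¹ * q) := by
      calc q * u = q * u * q⁻¹ * q := by
            rw [mul_assoc, inv_mul_cancel₀ hq0, mul_one]
        _ = p * u * p⁻¹ * q := by rw [h]
        _ = p * u * (p⁻¹ * q) := by rw [mul_assoc]
    have hcomm : r * u = u * r := by
      calc r * u = p⁻¹ * (q * u) := by rw [hr, mul_assoc]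
        _ = p⁻¹ * (p * (u * (p⁻¹ * q))) := by rw [h1, mul_assoc]
        _ = u * r := by rw [← mul_assoc, inv_mul_cancel₀ hp0, one_mul, hr]
    -- the imaginary part of r commutes with u
    have hvcomm : r.im * u = u * r.im := by
      have hsplit : (r.re : ℍ[ℝ]) + r.im = r := r.re_add_im
      have h2 : ((r.re : ℍ[ℝ]) + r.im) * u = u * ((r.re : ℍ[ℝ]) + r.im) := by
        rw [hsplit]; exact hcomm
      have hcoe : (r.re : ℍ[ℝ]) * u = u * (r.re : ℍ[ℝ]) := by
        rw [Quaternion.coe_mul_eq_smul, ← Quaternion.mul_coe_eq_smul]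
      rw [add_mul, mul_add, hcoe] at h2
      exact add_left_cancel h2
    obtain ⟨lam, hlam⟩ : ∃ lam : ℝ, lam = -((r.im * u).re) := ⟨_, rfl⟩
    obtain ⟨w, hw⟩ : ∃ w : ℍ[ℝ], w = r.im - lam • u := ⟨_, rfl⟩
    have hwim : w.re = 0 := by simp [hw, hu_im]
    have hwcomm : w * u = u * w := by
      rw [hw, sub_mul, mul_sub, hvcomm, smul_mul_assoc, mul_smul_comm]
    have hustar : star u = -u := by
      rw [Quaternion.star_eq_two_re_sub, hu_im]
      simp
    have hwstar : star w = -w := by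
      rw [Quaternion.star_eq_two_re_sub, hwim]
      simp
    have hstar : star (w * u) = w * u := by
      rw [star_mul, hustar, hwstar, neg_mul_neg, hwcomm]
    have hwu_re : (w * u).re = 0 := by
      have h3 : w * u = r.im * u - lam • (u * u) := by
        rw [hw, sub_mul, smul_mul_assoc]
      rw [h3, hu2]
      simp [hlam]
    have hwu : w * u = 0 := by
      rw [Quaternion.star_eq_self.mp hstar, hwu_re]
      exact Quaternion.coe_zero
    have hw0 : w = 0 := by
      rcases mul_eq_zero.mp hwu with h' | h'
      · exact h'
      · exact absurd h' hu0
    have him : r.im = lam • u := by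
      have := sub_eq_zero.mp (hw ▸ hw0)
      exact this
    obtain ⟨a, ha⟩ : ∃ a : ℝ, a = r.re := ⟨_, rfl⟩
    -- a² + lam² = 1
    have hnu : u.imI ^ 2 + u.imJ ^ 2 + u.imK ^ 2 = 1 := by
      have h2 : Quaternion.normSq u = 1 := by
        rw [Quaternion.normSq_eq_norm_mul_self, hu_norm]; norm_num
      rw [Quaternion.normSq_def', hu_im] at h2
      nlinarith [h2]
    have hA : a ^ 2 + lam ^ 2 = 1 := by
      have h2 : Quaternion.normSq r = 1 := by
        rw [Quaternion.normSq_eq_norm_mul_self, hrnorm]; norm_num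
      rw [Quaternion.normSq_def'] at h2
      have hiI : r.imI = lam * u.imI := by rw [← Quaternion.imI_im r, him]; simp
      have hiJ : r.imJ = lam * u.imJ := by rw [← Quaternion.imJ_im r, him]; simp
      have hiK : r.imK = lam * u.imK := by rw [← Quaternion.imK_im r, him]; simp
      rw [hiI, hiJ, hiK] at h2
      rw [ha]
      linear_combination h2 - lam ^ 2 * hnu
    -- pick the angle
    obtain ⟨z, hz⟩ : ∃ z : ℂ, z = ⟨a, lam⟩ := ⟨_, rfl⟩
    have habs : ‖z‖ = 1 := by
      rw [hz, Complex.norm_def, Complex.normSq_mk]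
      rw [show a * a + lam * lam = 1 by nlinarith [hA]]
      exact Real.sqrt_one
    have hz0 : z ≠ 0 := by
      intro h'; rw [h', norm_zero] at habs; norm_num at habs
    refine ⟨Complex.arg z, ?_⟩
    have hcos : Real.cos (Complex.arg z) = a := by
      rw [Complex.cos_arg hz0, habs, hz]; simp
    have hsin : Real.sin (Complex.arg z) = lam := by
      rw [Complex.sin_arg, habs, hz]; simp
    rw [exp_smul_unit_im u hu_im hu_norm, hcos, hsin]
    have : (↑a + lam • u : ℍ[ℝ]) = r := by
      rw [← him, ha, r.re_add_im]
    rw [this, hr, ← mul_assoc, mul_inv_cancel₀ hp0, one_mul]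
  · rintro ⟨t, rfl⟩
    have he := exp_smul_unit_im u hu_im hu_norm t
    set e : ℍ[ℝ] := NormedSpace.exp (t • u) with hedef
    have hecomm : e * u = u * e := by
      rw [he, add_mul, mul_add, Quaternion.coe_mul_eq_smul, ← Quaternion.mul_coe_eq_smul,
        smul_mul_assoc, mul_smul_comm]
    have he0 : e ≠ 0 := by
      have h1 : ‖e‖ = 1 := by
        rw [hedef, Quaternion.norm_exp]
        simp [hu_im]
      intro h; rw [h, norm_zero] at h1; norm_num at h1
    rw [mul_inv_rev]
    calc p * e * u * (e⁻¹ * p⁻¹) = p * (e * u * e⁻¹) * p⁻¹ := by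
          simp only [mul_assoc]
      _ = p * u * p⁻¹ := by
          rw [hecomm, mul_assoc u e, mul_inv_cancel₀ he0, mul_one]
end

section
/- Let u be a purely imaginary unit quaternion, p a unit quaternion, and X a quaternion with ⟨X, p⟩ = 0, where ⟨·,·⟩ is the real inner product on ℍ ≅ ℝ⁴ (so X is tangent to S³ at p). Then X·u·p⁻¹ − (p·u·p⁻¹)·X·p⁻¹ = 0 if and only if X = t·(p·u) for some t ∈ ℝ. (The kernel of the derivative of the u-Hopf projection at p, restricted to the tangent space of S³ at p, is exactly the line spanned by the Hopf-circle direction p·u; in particular a surface in S³ transverse to the u-Hopf circles Hopf-projects by an immersion.) -/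
open scoped Quaternion

open Quaternion

lemma q_inv_eq_star (p : ℍ[ℝ]) (hp : ‖p‖ = 1) : p⁻¹ = star p := by
  have hns : normSq p = 1 := by
    rw [Quaternion.normSq_eq_norm_mul_self, hp]; ring
  rw [Quaternion.inv_def, hns]
  norm_num

set_option maxHeartbeats 1000000 in
/-- The kernel of the derivative of the `u`-Hopf projection at a unit quaternion `p`,
restricted to the tangent space of `S³` at `p` (quaternions `X` with `⟨X, p⟩ = 0` in
`ℍ ≅ ℝ⁴`), is exactly the line spanned by the Hopf-circle direction `p·u`. -/
theorem hopf_projection_kernel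
    (u p X : ℍ[ℝ]) (hu_im : u.re = 0) (hu_norm : ‖u‖ = 1) (hp : ‖p‖ = 1)
    (hX : (inner ℝ X p : ℝ) = 0) :
    X * u * p⁻¹ - (p * u * p⁻¹) * X * p⁻¹ = 0 ↔ ∃ t : ℝ, X = t • (p * u) := by
  have hpinv : p⁻¹ = star p := q_inv_eq_star p hp
  have hns : normSq p = 1 := by
    rw [Quaternion.normSq_eq_norm_mul_self, hp]; ring
  have hsp : star p * p = 1 := by
    rw [Quaternion.star_mul_self, hns]; norm_num
  have hps : p * star p = 1 := by
    rw [Quaternion.self_mul_star, hns]; norm_num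
  have hsu : star u = -u := Quaternion.star_eq_neg.mpr hu_im
  have hu2 : u * u = -1 := by
    have h1 := Quaternion.star_mul_self u
    rw [hsu, neg_mul, show normSq u = 1 by
      rw [Quaternion.normSq_eq_norm_mul_self, hu_norm]; ring] at h1
    have h2 : -(u * u) = 1 := by exact_mod_cast h1
    exact neg_eq_iff_eq_neg.mp h2
  constructor
  · intro h
    set Y : ℍ[ℝ] := star p * X with hY
    have hcomm : Y * u = u * Y := by
      have h1 : X * u * star p - (p * u * star p) * X * star p = 0 := by
        rw [← hpinv]; exact h
      have h1' : X * u * star p = p * u * star p * X * star p :=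
        sub_eq_zero.mp h1
      have h2 : X * u = p * u * star p * X := by
        have := congrArg (· * p) h1'
        simpa [mul_assoc, hsp, mul_one] using this
      calc Y * u = star p * (X * u) := by rw [hY, mul_assoc]
        _ = star p * (p * u * star p * X) := by rw [h2]
        _ = (star p * p) * u * (star p * X) := by simp only [mul_assoc]
        _ = u * Y := by rw [hsp, one_mul, hY]
    have hYre : Y.re = 0 := by
      rw [Quaternion.inner_def] at hX
      rw [hY]
      simp only [Quaternion.re_mul, Quaternion.re_star, Quaternion.imI_star,
        Quaternion.imJ_star, Quaternion.imK_star] at hX ⊢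
      linarith
    have hsY : star Y = -Y := Quaternion.star_eq_neg.mpr hYre
    have hstar : star (Y * u) = Y * u := by
      rw [star_mul, hsu, hsY, neg_mul_neg, hcomm]
    have hreal : Y * u = ((Y * u).re : ℍ[ℝ]) := Quaternion.star_eq_self.mp hstar
    have hYeq : Y = (-(Y * u).re) • u := by
      have h3 := congrArg (· * u) hreal
      rw [mul_assoc, hu2, mul_neg_one] at h3
      calc Y = -(((Y * u).re : ℍ[ℝ]) * u) := neg_eq_iff_eq_neg.mp h3
        _ = (-(Y * u).re) • u := by rw [Quaternion.coe_mul_eq_smul, neg_smul]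
    have hXpY : X = p * Y := by
      rw [hY, ← mul_assoc, hps, one_mul]
    obtain ⟨r, hYr⟩ : ∃ r : ℝ, Y = r • u := ⟨-(Y * u).re, hYeq⟩
    exact ⟨r, by rw [hXpY, hYr, mul_smul_comm]⟩
  · rintro ⟨t, rfl⟩
    rw [hpinv]
    have h3 : p * u * star p * (p * u) = p * u * u := by
      have h4 : star p * (p * u) = u := by rw [← mul_assoc, hsp, one_mul]
      rw [mul_assoc, h4]
    simp only [smul_mul_assoc, mul_smul_comm, h3, sub_self]
end
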